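/- arXiv:1503.01194 — 3 statements merged into one kernel-verified Lean document; each statement's English description precedes it below -/
import Mathlib

section
/- In the group ring ℚ[GL₄(ℤ)], let P, Q be the 4×4 integer matrices P = [[1,0,0,0],[-1,1,0,0],[0,-1,1,0],[0,0,-1,1]] and Q = [[1,0,0,0],[0,1,0,0],[-1,-1,1,0],[0,0,-1,1]], let Φ = I + [[1,0,0,0],[0,1,1,0],[0,0,-1,0],[0,0,1,1]] + [[1,1,1,0],[0,-1,-1,0],[0,1,0,0],[0,0,1,1]] and Ψ = I + [[1,0,0,0],[0,1,0,0],[0,0,1,1],[0,0,0,-1]] + [[1,0,0,0],[0,1,1,1],[0,0,-1,-1],[0,0,1,0]] + [[1,1,1,1],[0,-1,-1,-1],[0,1,0,0],[0,0,1,0]], let sh(2,4) = ∑_{σ∈S₄, σ(1)<σ(2), σ(3)<σ(4)} σ (permutations viewed as permutation matrices), let E₂ = [[1,0],[1,1]], so that E₂⊕I₂ = [[1,0,0,0],[1,1,0,0],[0,0,1,0],[0,0,0,1]], and let ⟨(34)⟩-sum = e + (34). Then P · sh(2,4) · ⟨(34)⟩-sum · (E₂⊕I₂) = Ψ·Φ·Q.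 -/
/-- 4×4 integer matrices. -/
abbrev M4 : Type := Matrix (Fin 4) (Fin 4) ℤ

/-- The ℚ-algebra spanned freely by 4×4 integer matrices (containing the group
ring ℚ[GL₄(ℤ)] as the span of the invertible matrices). -/
abbrev QM4 : Type := MonoidAlgebra ℚ M4

/-- The canonical embedding of a matrix into the monoid algebra. -/
noncomputable def emb (M : M4) : QM4 := MonoidAlgebra.single M 1

/-- Permutation matrix `(δ_{i σ(j)})` of `σ ∈ S₄`. -/
def pm (σ : Equiv.Perm (Fin 4)) : M4 := Matrix.of fun i j => if i = σ j then 1 else 0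

/-- The shuffle element sh(2,4) = ∑_{σ(1)<σ(2), σ(3)<σ(4)} σ. -/
noncomputable def sh24 : QM4 :=
  ∑ σ ∈ Finset.univ.filter (fun σ : Equiv.Perm (Fin 4) => σ 0 < σ 1 ∧ σ 2 < σ 3), emb (pm σ)

/-- The element Φ. -/
noncomputable def Phi : QM4 :=
  emb 1 + emb !![1,0,0,0; 0,1,1,0; 0,0,-1,0; 0,0,1,1]
    + emb !![1,1,1,0; 0,-1,-1,0; 0,1,0,0; 0,0,1,1]

/-- The element Ψ. -/
noncomputable def Psi : QM4 :=
  emb 1 + emb !![1,0,0,0; 0,1,0,0; 0,0,1,1; 0,0,0,-1]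
    + emb !![1,0,0,0; 0,1,1,1; 0,0,-1,-1; 0,0,1,0]
    + emb !![1,1,1,1; 0,-1,-1,-1; 0,1,0,0; 0,0,1,0]


lemma emb_mul (A B : M4) : emb A * emb B = emb (A * B) := by
  simp [emb, MonoidAlgebra.single_mul_single]

lemma pmEq1 : pm ((1 : Equiv.Perm (Fin 4))) = (!![1, 0, 0, 0; 0, 1, 0, 0; 0, 0, 1, 0; 0, 0, 0, 1] : M4) := by decide

lemma pmEq2 : pm (Equiv.swap 1 2) = (!![1, 0, 0, 0; 0, 0, 1, 0; 0, 1, 0, 0; 0, 0, 0, 1] : M4) := by decide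

lemma pmEq3 : pm (Equiv.swap 1 3 * Equiv.swap 2 3) = (!![1, 0, 0, 0; 0, 0, 1, 0; 0, 0, 0, 1; 0, 1, 0, 0] : M4) := by decide

lemma pmEq4 : pm (Equiv.swap 0 1 * Equiv.swap 1 2) = (!![0, 0, 1, 0; 1, 0, 0, 0; 0, 1, 0, 0; 0, 0, 0, 1] : M4) := by decide

lemma pmEq5 : pm (Equiv.swap 0 1 * Equiv.swap 1 3 * Equiv.swap 2 3) = (!![0, 0, 1, 0; 1, 0, 0, 0; 0, 0, 0, 1; 0, 1, 0, 0] : M4) := by decide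

lemma pmEq6 : pm (Equiv.swap 0 2 * Equiv.swap 1 3) = (!![0, 0, 1, 0; 0, 0, 0, 1; 1, 0, 0, 0; 0, 1, 0, 0] : M4) := by decide

lemma pmSwap23 : pm (Equiv.swap 2 3) = (!![1, 0, 0, 0; 0, 1, 0, 0; 0, 0, 0, 1; 0, 0, 1, 0] : M4) := by decide

lemma L1 : !![1, 0, 0, 0; -1, 1, 0, 0; 0, -1, 1, 0; 0, 0, -1, 1] * (!![1, 0, 0, 0; 0, 1, 0, 0; 0, 0, 1, 0; 0, 0, 0, 1] : M4) * (1 : M4) * !![1, 0, 0, 0; 1, 1, 0, 0; 0, 0, 1, 0; 0, 0, 0, 1] = (!![1, 0, 0, 0; 0, 1, 0, 0; -1, -1, 1, 0; 0, 0, -1, 1] : M4) := by decide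

lemma L2 : !![1, 0, 0, 0; -1, 1, 0, 0; 0, -1, 1, 0; 0, 0, -1, 1] * (!![1, 0, 0, 0; 0, 1, 0, 0; 0, 0, 1, 0; 0, 0, 0, 1] : M4) * !![1, 0, 0, 0; 0, 1, 0, 0; 0, 0, 0, 1; 0, 0, 1, 0] * !![1, 0, 0, 0; 1, 1, 0, 0; 0, 0, 1, 0; 0, 0, 0, 1] = (!![1, 0, 0, 0; 0, 1, 0, 0; -1, -1, 0, 1; 0, 0, 1, -1] : M4) := by decide

lemma L3 : !![1, 0, 0, 0; -1, 1, 0, 0; 0, -1, 1, 0; 0, 0, -1, 1] * (!![1, 0, 0, 0; 0, 0, 1, 0; 0, 1, 0, 0; 0, 0, 0, 1] : M4) * (1 : M4) * !![1, 0, 0, 0; 1, 1, 0, 0; 0, 0, 1, 0; 0, 0, 0, 1] = (!![1, 0, 0, 0; -1, 0, 1, 0; 1, 1, -1, 0; -1, -1, 0, 1] : M4) := by decide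

lemma L4 : !![1, 0, 0, 0; -1, 1, 0, 0; 0, -1, 1, 0; 0, 0, -1, 1] * (!![1, 0, 0, 0; 0, 0, 1, 0; 0, 1, 0, 0; 0, 0, 0, 1] : M4) * !![1, 0, 0, 0; 0, 1, 0, 0; 0, 0, 0, 1; 0, 0, 1, 0] * !![1, 0, 0, 0; 1, 1, 0, 0; 0, 0, 1, 0; 0, 0, 0, 1] = (!![1, 0, 0, 0; -1, 0, 0, 1; 1, 1, 0, -1; -1, -1, 1, 0] : M4) := by decide

lemma L5 : !![1, 0, 0, 0; -1, 1, 0, 0; 0, -1, 1, 0; 0, 0, -1, 1] * (!![1, 0, 0, 0; 0, 0, 1, 0; 0, 0, 0, 1; 0, 1, 0, 0] : M4) * (1 : M4) * !![1, 0, 0, 0; 1, 1, 0, 0; 0, 0, 1, 0; 0, 0, 0, 1] = (!![1, 0, 0, 0; -1, 0, 1, 0; 0, 0, -1, 1; 1, 1, 0, -1] : M4) := by decide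

lemma L6 : !![1, 0, 0, 0; -1, 1, 0, 0; 0, -1, 1, 0; 0, 0, -1, 1] * (!![1, 0, 0, 0; 0, 0, 1, 0; 0, 0, 0, 1; 0, 1, 0, 0] : M4) * !![1, 0, 0, 0; 0, 1, 0, 0; 0, 0, 0, 1; 0, 0, 1, 0] * !![1, 0, 0, 0; 1, 1, 0, 0; 0, 0, 1, 0; 0, 0, 0, 1] = (!![1, 0, 0, 0; -1, 0, 0, 1; 0, 0, 1, -1; 1, 1, -1, 0] : M4) := by decide

lemma L7 : !![1, 0, 0, 0; -1, 1, 0, 0; 0, -1, 1, 0; 0, 0, -1, 1] * (!![0, 0, 1, 0; 1, 0, 0, 0; 0, 1, 0, 0; 0, 0, 0, 1] : M4) * (1 : M4) * !![1, 0, 0, 0; 1, 1, 0, 0; 0, 0, 1, 0; 0, 0, 0, 1] = (!![0, 0, 1, 0; 1, 0, -1, 0; 0, 1, 0, 0; -1, -1, 0, 1] : M4) := by decide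

lemma L8 : !![1, 0, 0, 0; -1, 1, 0, 0; 0, -1, 1, 0; 0, 0, -1, 1] * (!![0, 0, 1, 0; 1, 0, 0, 0; 0, 1, 0, 0; 0, 0, 0, 1] : M4) * !![1, 0, 0, 0; 0, 1, 0, 0; 0, 0, 0, 1; 0, 0, 1, 0] * !![1, 0, 0, 0; 1, 1, 0, 0; 0, 0, 1, 0; 0, 0, 0, 1] = (!![0, 0, 0, 1; 1, 0, 0, -1; 0, 1, 0, 0; -1, -1, 1, 0] : M4) := by decide

lemma L9 : !![1, 0, 0, 0; -1, 1, 0, 0; 0, -1, 1, 0; 0, 0, -1, 1] * (!![0, 0, 1, 0; 1, 0, 0, 0; 0, 0, 0, 1; 0, 1, 0, 0] : M4) * (1 : M4) * !![1, 0, 0, 0; 1, 1, 0, 0; 0, 0, 1, 0; 0, 0, 0, 1] = (!![0, 0, 1, 0; 1, 0, -1, 0; -1, 0, 0, 1; 1, 1, 0, -1] : M4) := by decide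

lemma L10 : !![1, 0, 0, 0; -1, 1, 0, 0; 0, -1, 1, 0; 0, 0, -1, 1] * (!![0, 0, 1, 0; 1, 0, 0, 0; 0, 0, 0, 1; 0, 1, 0, 0] : M4) * !![1, 0, 0, 0; 0, 1, 0, 0; 0, 0, 0, 1; 0, 0, 1, 0] * !![1, 0, 0, 0; 1, 1, 0, 0; 0, 0, 1, 0; 0, 0, 0, 1] = (!![0, 0, 0, 1; 1, 0, 0, -1; -1, 0, 1, 0; 1, 1, -1, 0] : M4) := by decide

lemma L11 : !![1, 0, 0, 0; -1, 1, 0, 0; 0, -1, 1, 0; 0, 0, -1, 1] * (!![0, 0, 1, 0; 0, 0, 0, 1; 1, 0, 0, 0; 0, 1, 0, 0] : M4) * (1 : M4) * !![1, 0, 0, 0; 1, 1, 0, 0; 0, 0, 1, 0; 0, 0, 0, 1] = (!![0, 0, 1, 0; 0, 0, -1, 1; 1, 0, 0, -1; 0, 1, 0, 0] : M4) := by decide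

lemma L12 : !![1, 0, 0, 0; -1, 1, 0, 0; 0, -1, 1, 0; 0, 0, -1, 1] * (!![0, 0, 1, 0; 0, 0, 0, 1; 1, 0, 0, 0; 0, 1, 0, 0] : M4) * !![1, 0, 0, 0; 0, 1, 0, 0; 0, 0, 0, 1; 0, 0, 1, 0] * !![1, 0, 0, 0; 1, 1, 0, 0; 0, 0, 1, 0; 0, 0, 0, 1] = (!![0, 0, 0, 1; 0, 0, 1, -1; 1, 0, -1, 0; 0, 1, 0, 0] : M4) := by decide

lemma R1 : ((1 : M4) : M4) * (1 : M4) * !![1, 0, 0, 0; 0, 1, 0, 0; -1, -1, 1, 0; 0, 0, -1, 1] = (!![1, 0, 0, 0; 0, 1, 0, 0; -1, -1, 1, 0; 0, 0, -1, 1] : M4) := by decide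

lemma R2 : ((1 : M4) : M4) * !![1, 0, 0, 0; 0, 1, 1, 0; 0, 0, -1, 0; 0, 0, 1, 1] * !![1, 0, 0, 0; 0, 1, 0, 0; -1, -1, 1, 0; 0, 0, -1, 1] = (!![1, 0, 0, 0; -1, 0, 1, 0; 1, 1, -1, 0; -1, -1, 0, 1] : M4) := by decide

lemma R3 : ((1 : M4) : M4) * !![1, 1, 1, 0; 0, -1, -1, 0; 0, 1, 0, 0; 0, 0, 1, 1] * !![1, 0, 0, 0; 0, 1, 0, 0; -1, -1, 1, 0; 0, 0, -1, 1] = (!![0, 0, 1, 0; 1, 0, -1, 0; 0, 1, 0, 0; -1, -1, 0, 1] : M4) := by decide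

lemma R4 : (!![1, 0, 0, 0; 0, 1, 0, 0; 0, 0, 1, 1; 0, 0, 0, -1] : M4) * (1 : M4) * !![1, 0, 0, 0; 0, 1, 0, 0; -1, -1, 1, 0; 0, 0, -1, 1] = (!![1, 0, 0, 0; 0, 1, 0, 0; -1, -1, 0, 1; 0, 0, 1, -1] : M4) := by decide

lemma R5 : (!![1, 0, 0, 0; 0, 1, 0, 0; 0, 0, 1, 1; 0, 0, 0, -1] : M4) * !![1, 0, 0, 0; 0, 1, 1, 0; 0, 0, -1, 0; 0, 0, 1, 1] * !![1, 0, 0, 0; 0, 1, 0, 0; -1, -1, 1, 0; 0, 0, -1, 1] = (!![1, 0, 0, 0; -1, 0, 1, 0; 0, 0, -1, 1; 1, 1, 0, -1] : M4) := by decide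

lemma R6 : (!![1, 0, 0, 0; 0, 1, 0, 0; 0, 0, 1, 1; 0, 0, 0, -1] : M4) * !![1, 1, 1, 0; 0, -1, -1, 0; 0, 1, 0, 0; 0, 0, 1, 1] * !![1, 0, 0, 0; 0, 1, 0, 0; -1, -1, 1, 0; 0, 0, -1, 1] = (!![0, 0, 1, 0; 1, 0, -1, 0; -1, 0, 0, 1; 1, 1, 0, -1] : M4) := by decide

lemma R7 : (!![1, 0, 0, 0; 0, 1, 1, 1; 0, 0, -1, -1; 0, 0, 1, 0] : M4) * (1 : M4) * !![1, 0, 0, 0; 0, 1, 0, 0; -1, -1, 1, 0; 0, 0, -1, 1] = (!![1, 0, 0, 0; -1, 0, 0, 1; 1, 1, 0, -1; -1, -1, 1, 0] : M4) := by decide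

lemma R8 : (!![1, 0, 0, 0; 0, 1, 1, 1; 0, 0, -1, -1; 0, 0, 1, 0] : M4) * !![1, 0, 0, 0; 0, 1, 1, 0; 0, 0, -1, 0; 0, 0, 1, 1] * !![1, 0, 0, 0; 0, 1, 0, 0; -1, -1, 1, 0; 0, 0, -1, 1] = (!![1, 0, 0, 0; -1, 0, 0, 1; 0, 0, 1, -1; 1, 1, -1, 0] : M4) := by decide

lemma R9 : (!![1, 0, 0, 0; 0, 1, 1, 1; 0, 0, -1, -1; 0, 0, 1, 0] : M4) * !![1, 1, 1, 0; 0, -1, -1, 0; 0, 1, 0, 0; 0, 0, 1, 1] * !![1, 0, 0, 0; 0, 1, 0, 0; -1, -1, 1, 0; 0, 0, -1, 1] = (!![0, 0, 1, 0; 0, 0, -1, 1; 1, 0, 0, -1; 0, 1, 0, 0] : M4) := by decide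

lemma R10 : (!![1, 1, 1, 1; 0, -1, -1, -1; 0, 1, 0, 0; 0, 0, 1, 0] : M4) * (1 : M4) * !![1, 0, 0, 0; 0, 1, 0, 0; -1, -1, 1, 0; 0, 0, -1, 1] = (!![0, 0, 0, 1; 1, 0, 0, -1; 0, 1, 0, 0; -1, -1, 1, 0] : M4) := by decide

lemma R11 : (!![1, 1, 1, 1; 0, -1, -1, -1; 0, 1, 0, 0; 0, 0, 1, 0] : M4) * !![1, 0, 0, 0; 0, 1, 1, 0; 0, 0, -1, 0; 0, 0, 1, 1] * !![1, 0, 0, 0; 0, 1, 0, 0; -1, -1, 1, 0; 0, 0, -1, 1] = (!![0, 0, 0, 1; 1, 0, 0, -1; -1, 0, 1, 0; 1, 1, -1, 0] : M4) := by decide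

lemma R12 : (!![1, 1, 1, 1; 0, -1, -1, -1; 0, 1, 0, 0; 0, 0, 1, 0] : M4) * !![1, 1, 1, 0; 0, -1, -1, 0; 0, 1, 0, 0; 0, 0, 1, 1] * !![1, 0, 0, 0; 0, 1, 0, 0; -1, -1, 1, 0; 0, 0, -1, 1] = (!![0, 0, 0, 1; 0, 0, 1, -1; 1, 0, -1, 0; 0, 1, 0, 0] : M4) := by decide

lemma sh24_eq : sh24 = emb (!![1, 0, 0, 0; 0, 1, 0, 0; 0, 0, 1, 0; 0, 0, 0, 1] : M4) + emb (!![1, 0, 0, 0; 0, 0, 1, 0; 0, 1, 0, 0; 0, 0, 0, 1] : M4) + emb (!![1, 0, 0, 0; 0, 0, 1, 0; 0, 0, 0, 1; 0, 1, 0, 0] : M4) + emb (!![0, 0, 1, 0; 1, 0, 0, 0; 0, 1, 0, 0; 0, 0, 0, 1] : M4) + emb (!![0, 0, 1, 0; 1, 0, 0, 0; 0, 0, 0, 1; 0, 1, 0, 0] : M4) + emb (!![0, 0, 1, 0; 0, 0, 0, 1; 1, 0, 0, 0; 0, 1, 0, 0] : M4) := by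
  unfold sh24
  rw [show (Finset.univ.filter (fun σ : Equiv.Perm (Fin 4) => σ 0 < σ 1 ∧ σ 2 < σ 3))
      = ({(1 : Equiv.Perm (Fin 4)), Equiv.swap 1 2, Equiv.swap 1 3 * Equiv.swap 2 3, Equiv.swap 0 1 * Equiv.swap 1 2, Equiv.swap 0 1 * Equiv.swap 1 3 * Equiv.swap 2 3, Equiv.swap 0 2 * Equiv.swap 1 3} : Finset (Equiv.Perm (Fin 4))) from by decide]
  rw [Finset.sum_insert (by decide), Finset.sum_insert (by decide),
    Finset.sum_insert (by decide), Finset.sum_insert (by decide),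
    Finset.sum_insert (by decide), Finset.sum_singleton]
  rw [pmEq1, pmEq2, pmEq3, pmEq4, pmEq5, pmEq6]
  abel

/-- P · sh(2,4) · (e+(34)) · (E₂⊕I₂) = Ψ·Φ·Q in ℚ[GL₄(ℤ)]. -/
theorem lem_2_1_eq3 :
    emb !![1,0,0,0; -1,1,0,0; 0,-1,1,0; 0,0,-1,1] * sh24
        * (emb 1 + emb (pm (Equiv.swap 2 3)))
        * emb !![1,0,0,0; 1,1,0,0; 0,0,1,0; 0,0,0,1]
      = Psi * Phi * emb !![1,0,0,0; 0,1,0,0; -1,-1,1,0; 0,0,-1,1] := by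
  rw [pmSwap23, sh24_eq]
  unfold Psi Phi
  simp only [mul_add, add_mul, emb_mul]
  rw [L1, L2, L3, L4, L5, L6, L7, L8, L9, L10, L11, L12,
    R1, R2, R3, R4, R5, R6, R7, R8, R9, R10, R11, R12]
  abel
end

section
/- In ℚ[M₄(ℤ)], with Φ, R as before (Φ = I + [[1,0,0,0],[0,1,1,0],[0,0,-1,0],[0,0,1,1]] + [[1,1,1,0],[0,-1,-1,0],[0,1,0,0],[0,0,1,1]], R = [[1,0,0,0],[0,1,0,0],[-1,-1,1,0],[0,0,0,1]]), C₄ = {e,(1234),(13)(24),(1432)}, J = diag(0,1,1,1), and T₂,T₃,T₄ = [[0,0,0,0],[0,1,0,0],[0,0,1,0],[0,1,1,1]], [[0,0,0,0],[0,1,0,0],[0,0,1,1],[0,1,1,0]], [[0,0,0,0],[0,1,1,0],[0,0,0,1],[0,1,0,0]], the identity (ΦR·∑_{σ∈C₄}σ)^{-∗}·J = (∑_{σ∈C₄}σ)·(234)·(T₂+T₃+T₄) holds, where (234) is the permutation matrix of the 3-cycle (234). -/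
/-- The inverse-star map: for Γ = ∑ aₖ Mₖ, Γ^{-∗} = ∑ aₖ Mₖ⁻¹. -/
noncomputable def invStar (Γ : QM4) : QM4 :=
  Finsupp.sum Γ.coeff (fun M a => MonoidAlgebra.single M⁻¹ a)

/-- The 4-cycle (1234) (on Fin 4: 0↦1↦2↦3↦0). -/
def c1234 : Equiv.Perm (Fin 4) := Equiv.swap 0 1 * Equiv.swap 1 2 * Equiv.swap 2 3

/-- The sum ∑_{σ∈C₄} σ over the cyclic group C₄ = {e,(1234),(13)(24),(1432)}. -/
noncomputable def C4sum : QM4 :=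
  emb 1 + emb (pm c1234) + emb (pm (c1234 ^ 2)) + emb (pm (c1234 ^ 3))

/-- J = diag(0,1,1,1). -/
def J : M4 := !![0,0,0,0; 0,1,0,0; 0,0,1,0; 0,0,0,1]

def T1 : M4 := !![0,0,0,0; 0,1,0,0; 0,1,1,0; 0,1,1,1]
def T2 : M4 := !![0,0,0,0; 0,1,0,0; 0,0,1,0; 0,1,1,1]
def T3 : M4 := !![0,0,0,0; 0,1,0,0; 0,0,1,1; 0,1,1,0]
def T4 : M4 := !![0,0,0,0; 0,1,1,0; 0,0,0,1; 0,1,0,0]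

/-- The 3-cycle (234) (on Fin 4: 1↦2↦3↦1). -/
def c234 : Equiv.Perm (Fin 4) := Equiv.swap 1 2 * Equiv.swap 2 3

lemma invStar_zero : invStar 0 = 0 := by
  simp [invStar]

lemma invStar_add (x y : QM4) : invStar (x + y) = invStar x + invStar y := by
  unfold invStar
  rw [MonoidAlgebra.coeff_add]
  exact Finsupp.sum_add_index' (fun _ => by simp) (fun _ _ _ => MonoidAlgebra.single_add ..)

lemma invStar_single (M : M4) (a : ℚ) :
    invStar (MonoidAlgebra.single M a) = MonoidAlgebra.single M⁻¹ a := by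
  unfold invStar
  rw [MonoidAlgebra.coeff_single, Finsupp.sum_single_index]
  simp

lemma invStar_emb (M : M4) : invStar (emb M) = emb M⁻¹ :=
  invStar_single M 1

lemma invStar_mul (x y : QM4) : invStar (x * y) = invStar y * invStar x := by
  induction x using MonoidAlgebra.induction_linear with
  | zero => simp [invStar_zero]
  | add x x' hx hx' => rw [add_mul, invStar_add, invStar_add, hx, hx', mul_add]
  | single A a =>
    induction y using MonoidAlgebra.induction_linear with
    | zero => simp [invStar_zero]
    | add y y' hy hy' => rw [mul_add, invStar_add, invStar_add, hy, hy', add_mul]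
    | single B b =>
      simp only [MonoidAlgebra.single_mul_single, invStar_single, Matrix.mul_inv_rev, mul_comm a b]

lemma pm_one : pm 1 = 1 := by
  ext i j
  simp only [pm, Matrix.of_apply, Equiv.Perm.coe_one, id, Matrix.one_apply]
  congr

lemma pm_mul (σ τ : Equiv.Perm (Fin 4)) : pm (σ * τ) = pm σ * pm τ := by
  ext i j
  simp only [pm, Equiv.Perm.coe_mul, Function.comp_apply, Matrix.of_apply, Matrix.mul_apply,
    mul_ite, mul_one, mul_zero, Finset.sum_ite_eq', Finset.mem_univ, ↓reduceIte]
  congr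

lemma pm_inv (σ : Equiv.Perm (Fin 4)) : (pm σ)⁻¹ = pm σ⁻¹ :=
  Matrix.inv_eq_left_inv (by rw [← pm_mul, inv_mul_cancel, pm_one])

lemma invStar_C4sum : invStar C4sum = C4sum := by
  have hinv : c1234⁻¹ = c1234 ^ 3 := by decide
  have hinv_sq : (c1234 ^ 2)⁻¹ = c1234 ^ 2 := by decide
  have hinv_cube : (c1234 ^ 3)⁻¹ = c1234 := by decide
  simp only [C4sum, invStar_add, invStar_emb, inv_one, pm_inv, hinv, hinv_sq, hinv_cube]
  abel

lemma C4sum_mul_emb_pm_sq : C4sum * emb (pm (c1234 ^ 2)) = C4sum := by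
  have hsq_sq : c1234 ^ 2 * c1234 ^ 2 = 1 := by decide
  have hcube_sq : c1234 ^ 3 * c1234 ^ 2 = c1234 := by decide
  simp only [C4sum, add_mul, emb_mul, ← pm_mul, one_mul, hsq_sq, hcube_sq, ← pow_succ', pm_one]
  abel

lemma invStar_Phi :
    invStar Phi = emb 1 + emb !![1,0,0,0; 0,1,1,0; 0,0,-1,0; 0,0,1,1]
      + emb !![1,1,0,0; 0,0,1,0; 0,-1,-1,0; 0,1,1,1] := by
  have hA : (!![1,0,0,0; 0,1,1,0; 0,0,-1,0; 0,0,1,1] : M4)⁻¹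
      = !![1,0,0,0; 0,1,1,0; 0,0,-1,0; 0,0,1,1] :=
    Matrix.inv_eq_left_inv (by decide)
  have hB : (!![1,1,1,0; 0,-1,-1,0; 0,1,0,0; 0,0,1,1] : M4)⁻¹
      = !![1,1,0,0; 0,0,1,0; 0,-1,-1,0; 0,1,1,1] :=
    Matrix.inv_eq_left_inv (by decide)
  simp only [Phi, invStar_add, invStar_emb, inv_one, hA, hB]

lemma emb_R_inv_mul_invStar_Phi_mul_emb_J :
    emb (!![1,0,0,0; 0,1,0,0; -1,-1,1,0; 0,0,0,1] : M4)⁻¹ * invStar Phi * emb J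
      = emb (pm c234) * (emb T4 + emb T3) + emb (pm (c1234 ^ 2)) * emb (pm c234) * emb T2 := by
  have hR : (!![1,0,0,0; 0,1,0,0; -1,-1,1,0; 0,0,0,1] : M4)⁻¹
      = !![1,0,0,0; 0,1,0,0; 1,1,1,0; 0,0,0,1] :=
    Matrix.inv_eq_left_inv (by decide)
  have h₁ : !![1,0,0,0; 0,1,0,0; 1,1,1,0; 0,0,0,1] * 1 * J = pm c234 * T4 := by decide
  have h₂ : !![1,0,0,0; 0,1,0,0; 1,1,1,0; 0,0,0,1] * !![1,0,0,0; 0,1,1,0; 0,0,-1,0; 0,0,1,1] * J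
      = pm c234 * T3 := by decide
  have h₃ : !![1,0,0,0; 0,1,0,0; 1,1,1,0; 0,0,0,1] * !![1,1,0,0; 0,0,1,0; 0,-1,-1,0; 0,1,1,1] * J
      = pm (c1234 ^ 2) * pm c234 * T2 := by decide
  rw [hR, invStar_Phi]
  simp only [mul_add, add_mul, emb_mul, h₁, h₂, h₃]

/-- (ΦR·∑_{σ∈C₄}σ)^{-∗}·J = (∑_{σ∈C₄}σ)·(234)·(T₂+T₃+T₄) in ℚ[M₄(ℤ)]. -/
theorem lem_2_2_eq3 :
    invStar (Phi * emb !![1,0,0,0; 0,1,0,0; -1,-1,1,0; 0,0,0,1] * C4sum) * emb J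
      = C4sum * emb (pm c234) * (emb T2 + emb T3 + emb T4) := by
  calc invStar (Phi * emb !![1,0,0,0; 0,1,0,0; -1,-1,1,0; 0,0,0,1] * C4sum) * emb J
      = C4sum * (emb (!![1,0,0,0; 0,1,0,0; -1,-1,1,0; 0,0,0,1] : M4)⁻¹ * invStar Phi * emb J) := by
        rw [invStar_mul, invStar_mul, invStar_C4sum, invStar_emb]
        simp only [mul_assoc]
    _ = C4sum * emb (pm c234) * (emb T4 + emb T3)
          + C4sum * emb (pm (c1234 ^ 2)) * emb (pm c234) * emb T2 := by
        rw [emb_R_inv_mul_invStar_Phi_mul_emb_J]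
        simp only [mul_add, mul_assoc]
    _ = C4sum * emb (pm c234) * (emb T2 + emb T3 + emb T4) := by
        rw [C4sum_mul_emb_pm_sq]
        simp only [mul_add]
        abel
end

section
/- For any l₁,l₂ ≥ 1 with l₁+l₂ > 2, the sum formula for double zeta values of weight l = l₁+l₂ can be stated as: for every integer l > 2, ∑_{a=2}^{l-1} ζ(a, l-a) = ζ(l), where ζ(a,b) = ∑_{m>n>0} 1/(mᵃnᵇ) for a ≥ 2, b ≥ 1. -/
/-- Riemann zeta value ζ(l) = ∑_{m≥1} 1/m^l. -/
noncomputable def zeta1 (l : ℕ) : ℝ := ∑' m : ℕ, 1 / ((m + 1 : ℝ)) ^ l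

/-- Double zeta value ζ(a,b) = ∑_{m>n>0} 1/(mᵃnᵇ). -/
noncomputable def zeta2 (a b : ℕ) : ℝ :=
  ∑' m : {m : ℕ × ℕ // m.1 > m.2 ∧ m.2 > 0}, 1 / ((m.1.1 : ℝ) ^ a * (m.1.2 : ℝ) ^ b)

/-!
For `m > n > 0` the partial-fraction identity
`∑_{a=2}^{l-1} 1/(mᵃ n^(l-a)) + 1/((m-n) m^(l-1)) = 1/(n^(l-2) (m-n) m)`
summed over all such pairs gives `∑_a ζ(a, l-a) + ζ(l-1, 1) = ∑_{n≥1} Hₙ / n^(l-1)`: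
the reflection `(m, n) ↦ (m, m-n)` turns the second term on the left into `ζ(l-1, 1)`, and
`∑_{m>n} 1/((m-n) m) = Hₙ/n`. Summing `ζ(l-1, 1)` over `m` first gives `∑_m H_{m-1}/m^(l-1)`,
so `Hₙ = H_{n-1} + 1/n` yields `∑_{n≥1} Hₙ / n^(l-1) = ζ(l-1, 1) + ζ(l)`, and cancelling
`ζ(l-1, 1) ≤ ζ(l-1) < ∞` proves the formula. All series are summed in `ℝ≥0∞`, where
rearranging them needs no convergence argument.
-/

open Finset Filter Topology
open scoped ENNReal

lemma hasSum_one_div_mul_add_one {c : ℝ} (hc : 0 < c) :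
    HasSum (fun d : ℕ => 1 / ((c + d) * (c + d + 1))) (1 / c) := by
  have hterm (d : ℕ) : 1 / ((c + d) * (c + d + 1)) = 1 / (c + d) - 1 / (c + (d + 1 : ℕ)) := by
    have : c + d ≠ 0 := by positivity
    have : c + d + 1 ≠ 0 := by positivity
    push_cast; field_simp; ring
  rw [hasSum_iff_tendsto_nat_of_nonneg (fun d => by positivity)]
  simp_rw [hterm, sum_range_sub' (fun d : ℕ => 1 / (c + d))]
  have : Tendsto (fun n : ℕ => 1 / (c + n)) atTop (𝓝 0) :=
    tendsto_const_nhds.div_atTop (tendsto_atTop_add_const_left _ _ tendsto_natCast_atTop_atTop)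
  simpa using this.const_sub (1 / c)

lemma sum_range_one_div_mul_add_one {x : ℝ} (hx : 0 < x) (n : ℕ) :
    ∑ k ∈ range n, 1 / ((x + k) * (x + k + 1)) = n / (x * (x + n)) := by
  induction n with
  | zero => simp
  | succ n ih =>
    have : x + n ≠ 0 := by positivity
    have : x + n + 1 ≠ 0 := by positivity
    rw [sum_range_succ, ih]; push_cast; field_simp; ring

lemma hasSum_natCast_div_mul_harmonic (n : ℕ) :
    HasSum (fun d : ℕ => (n : ℝ) / (((d : ℝ) + 1) * ((d : ℝ) + 1 + n))) (harmonic n) := by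
  have h := hasSum_sum (s := range n) fun k _ =>
    hasSum_one_div_mul_add_one (c := (k : ℝ) + 1) (by positivity)
  convert h using 1
  · ext d
    rw [← sum_range_one_div_mul_add_one (by positivity : (0 : ℝ) < d + 1)]
    exact sum_congr rfl fun k _ => by ring_nf
  · simp [harmonic]

lemma sum_Icc_one_div_pow_mul_pow_add {x y : ℝ} (hx : x ≠ 0) (hy : y ≠ 0) (hxy : x ≠ y)
    {l : ℕ} (hl : 2 ≤ l) :
    ∑ a ∈ Icc 2 (l - 1), 1 / (x ^ a * y ^ (l - a)) + 1 / ((x - y) * x ^ (l - 1)) =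
      1 / (y ^ (l - 2) * (x - y) * x) := by
  have hxy' : x - y ≠ 0 := sub_ne_zero.mpr hxy
  obtain ⟨k, rfl⟩ : ∃ k, l = k + 2 := ⟨l - 2, by omega⟩
  simp only [show k + 2 - 1 = k + 1 by omega, Nat.add_sub_cancel]
  clear hl
  induction k with
  | zero => simp
  | succ k ih =>
    rw [sum_Icc_succ_top (by omega)]
    have hshift : ∑ a ∈ Icc 2 (k + 1), 1 / (x ^ a * y ^ (k + 1 + 2 - a)) =
        y⁻¹ * ∑ a ∈ Icc 2 (k + 1), 1 / (x ^ a * y ^ (k + 2 - a)) := by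
      rw [mul_sum]
      refine sum_congr rfl fun a ha => ?_
      rw [show k + 1 + 2 - a = k + 2 - a + 1 by rw [mem_Icc] at ha; omega, pow_succ]
      field_simp
    rw [hshift, eq_sub_of_add_eq ih, show k + 1 + 2 - (k + 1 + 1) = 1 by omega]
    field_simp
    ring

lemma pow_mul_sub_one_mul_le_pow_mul_pow {y m : ℝ} (hy : 0 ≤ y) (hym : y ≤ m) (hm : 1 ≤ m)
    {a : ℕ} (ha : 2 ≤ a) (b : ℕ) : y ^ (a + b - 2) * ((m - 1) * m) ≤ m ^ a * y ^ b :=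
  calc y ^ (a + b - 2) * ((m - 1) * m) = y ^ (a - 2) * ((m - 1) * m) * y ^ b := by
        rw [show a + b - 2 = a - 2 + b by omega, pow_add]; ring
    _ ≤ m ^ (a - 2) * m ^ 2 * y ^ b := by
        have : 0 ≤ m - 1 := by linarith
        gcongr; nlinarith
    _ = m ^ a * y ^ b := by rw [← pow_add, show a - 2 + 2 = a by omega]

lemma tsum_eq_toReal_tsum_ofReal {α : Type*} {f : α → ℝ} (hf : ∀ a, 0 ≤ f a) :
    ∑' a, f a = (∑' a, ENNReal.ofReal (f a)).toReal := by
  rw [ENNReal.tsum_toReal_eq fun _ => ENNReal.ofReal_ne_top]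
  exact tsum_congr fun a => (ENNReal.toReal_ofReal (hf a)).symm

lemma tsum_ofReal_eq_of_hasSum {α : Type*} {f : α → ℝ} {r : ℝ} (hf : ∀ a, 0 ≤ f a)
    (h : HasSum f r) : ∑' a, ENNReal.ofReal (f a) = ENNReal.ofReal r := by
  rw [← ENNReal.ofReal_tsum_of_nonneg hf h.summable, h.tsum_eq]

abbrev ZetaIndex : Type := {m : ℕ × ℕ // m.1 > m.2 ∧ m.2 > 0}

def prodEquivZetaIndex : ℕ × ℕ ≃ ZetaIndex where
  toFun p := ⟨(p.1 + p.2 + 2, p.1 + 1), by omega⟩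
  invFun s := (s.1.2 - 1, s.1.1 - s.1.2 - 1)
  left_inv p := by ext <;> dsimp only <;> omega
  right_inv s := by ext <;> dsimp only <;> omega

def sigmaEquivZetaIndex : (Σ m : ℕ, Fin m) ≃ ZetaIndex where
  toFun p := ⟨(p.1 + 1, p.2 + 1), by omega⟩
  invFun s := ⟨s.1.1 - 1, s.1.2 - 1, by omega⟩
  left_inv p := by ext <;> simp
  right_inv s := by ext <;> dsimp only <;> omega

def reflectZetaIndex : ZetaIndex ≃ ZetaIndex :=
  Function.Involutive.toPerm (fun s => ⟨(s.1.1, s.1.1 - s.1.2), by omega⟩)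
    fun s => by ext <;> dsimp only; omega

lemma tsum_zetaIndex_eq_tsum_tsum (f : ℕ × ℕ → ℝ≥0∞) :
    ∑' s : ZetaIndex, f s.1 = ∑' (n : ℕ) (d : ℕ), f (n + d + 2, n + 1) := by
  rw [← prodEquivZetaIndex.tsum_eq]
  exact ENNReal.tsum_prod (f := fun n d => f (n + d + 2, n + 1))

lemma tsum_zetaIndex_eq_tsum_sum (f : ℕ × ℕ → ℝ≥0∞) :
    ∑' s : ZetaIndex, f s.1 = ∑' m : ℕ, ∑ n ∈ range m, f (m + 1, n + 1) := by
  rw [← sigmaEquivZetaIndex.tsum_eq, ENNReal.tsum_sigma']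
  refine tsum_congr fun m => ?_
  rw [tsum_fintype]
  exact Fin.sum_univ_eq_sum_range (fun n => f (m + 1, n + 1)) m

noncomputable def zeta1E (l : ℕ) : ℝ≥0∞ := ∑' m : ℕ, ENNReal.ofReal (1 / ((m + 1 : ℝ)) ^ l)

noncomputable def zeta2E (a b : ℕ) : ℝ≥0∞ :=
  ∑' s : ZetaIndex, ENNReal.ofReal (1 / ((s.1.1 : ℝ) ^ a * (s.1.2 : ℝ) ^ b))

-- `eulerSumE k = ∑_{n≥1} Hₙ / nᵏ`
noncomputable def eulerSumE (k : ℕ) : ℝ≥0∞ :=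
  ∑' n : ℕ, ENNReal.ofReal (harmonic (n + 1) / ((n : ℝ) + 1) ^ k)

lemma zeta1_eq_toReal (l : ℕ) : zeta1 l = (zeta1E l).toReal :=
  tsum_eq_toReal_tsum_ofReal fun _ => by positivity

lemma zeta2_eq_toReal (a b : ℕ) : zeta2 a b = (zeta2E a b).toReal :=
  tsum_eq_toReal_tsum_ofReal fun _ => by positivity

lemma zeta1E_ne_top {l : ℕ} (hl : 2 ≤ l) : zeta1E l ≠ ∞ := by
  have hsum : Summable fun m : ℕ => 1 / ((m + 1 : ℝ)) ^ l := by
    simpa using (summable_nat_add_iff 1).mpr (Real.summable_one_div_nat_pow.mpr hl)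
  exact hsum.tsum_ofReal_ne_top

lemma zeta2E_le_zeta1E {a : ℕ} (ha : 2 ≤ a) (b : ℕ) : zeta2E a b ≤ zeta1E (a + b - 1) := by
  rw [zeta2E, tsum_zetaIndex_eq_tsum_tsum
    (fun p => ENNReal.ofReal (1 / ((p.1 : ℝ) ^ a * (p.2 : ℝ) ^ b)))]
  refine ENNReal.tsum_le_tsum fun n => ?_
  have hn : (0 : ℝ) < n + 1 := by positivity
  calc ∑' d : ℕ, ENNReal.ofReal (1 / (((n + d + 2 : ℕ) : ℝ) ^ a * ((n + 1 : ℕ) : ℝ) ^ b))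
      ≤ ∑' d : ℕ, ENNReal.ofReal (1 / ((n : ℝ) + 1) ^ (a + b - 2) *
          (1 / ((n + 1 + d) * (n + 1 + d + 1)))) := by
        refine ENNReal.tsum_le_tsum fun d => ENNReal.ofReal_le_ofReal ?_
        rw [one_div_mul_one_div]
        apply one_div_le_one_div_of_le (by positivity)
        have h := pow_mul_sub_one_mul_le_pow_mul_pow (y := (n : ℝ) + 1) (m := (n : ℝ) + d + 2)
          (by positivity) (by linarith [(d.cast_nonneg : (0 : ℝ) ≤ d)]) (by linarith) ha b
        push_cast
        exact (le_of_eq (by ring)).trans h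
    _ = ENNReal.ofReal (1 / ((n : ℝ) + 1) ^ (a + b - 2) * (1 / (n + 1))) := by
        simp_rw [ENNReal.ofReal_mul (by positivity : (0 : ℝ) ≤ 1 / ((n : ℝ) + 1) ^ (a + b - 2))]
        rw [ENNReal.tsum_mul_left,
          tsum_ofReal_eq_of_hasSum (fun d => by positivity) (hasSum_one_div_mul_add_one hn)]
    _ = ENNReal.ofReal (1 / ((n : ℝ) + 1) ^ (a + b - 1)) := by
        rw [one_div_mul_one_div, ← pow_succ, show a + b - 2 + 1 = a + b - 1 by omega]

lemma sum_Icc_zeta2E_add_tsum_eq {l : ℕ} (hl : 2 ≤ l) :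
    ∑ a ∈ Icc 2 (l - 1), zeta2E a (l - a) +
        ∑' s : ZetaIndex, ENNReal.ofReal (1 / (((s.1.1 : ℝ) - s.1.2) * (s.1.1 : ℝ) ^ (l - 1))) =
      ∑' s : ZetaIndex,
        ENNReal.ofReal (1 / ((s.1.2 : ℝ) ^ (l - 2) * ((s.1.1 : ℝ) - s.1.2) * s.1.1)) := by
  simp only [zeta2E]
  rw [← Summable.tsum_finsetSum fun _ _ => ENNReal.summable, ← ENNReal.tsum_add]
  refine tsum_congr fun ⟨(m, n), hmn, hn⟩ => ?_
  have hn' : (0 : ℝ) < n := by exact_mod_cast hn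
  have hmn' : (n : ℝ) < m := by exact_mod_cast hmn
  have hsub : (0 : ℝ) < m - n := sub_pos.mpr hmn'
  have hm : (0 : ℝ) < m := hn'.trans hmn'
  rw [← ENNReal.ofReal_sum_of_nonneg fun a _ => by positivity,
    ← ENNReal.ofReal_add (sum_nonneg fun a _ => by positivity) (by positivity),
    sum_Icc_one_div_pow_mul_pow_add hm.ne' hn'.ne' hmn'.ne' hl]

lemma tsum_ofReal_one_div_sub_mul_pow (k : ℕ) :
    ∑' s : ZetaIndex, ENNReal.ofReal (1 / (((s.1.1 : ℝ) - s.1.2) * (s.1.1 : ℝ) ^ k)) =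
      zeta2E k 1 := by
  rw [zeta2E, ← reflectZetaIndex.tsum_eq]
  refine tsum_congr fun ⟨(m, n), hmn, _⟩ => ?_
  show ENNReal.ofReal (1 / (((m : ℝ) - ((m - n : ℕ) : ℝ)) * (m : ℝ) ^ k)) = _
  rw [Nat.cast_sub hmn.le, sub_sub_cancel, pow_one, mul_comm]

lemma tsum_ofReal_one_div_pow_mul_sub_mul (k : ℕ) :
    ∑' s : ZetaIndex, ENNReal.ofReal (1 / ((s.1.2 : ℝ) ^ k * ((s.1.1 : ℝ) - s.1.2) * s.1.1)) =
      eulerSumE (k + 1) := by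
  rw [tsum_zetaIndex_eq_tsum_tsum
    (fun p => ENNReal.ofReal (1 / ((p.2 : ℝ) ^ k * ((p.1 : ℝ) - p.2) * p.1))), eulerSumE]
  refine tsum_congr fun n => ?_
  have hn : (0 : ℝ) < n + 1 := by positivity
  have hterm (d : ℕ) : 1 / (((n + 1 : ℕ) : ℝ) ^ k * (((n + d + 2 : ℕ) : ℝ) - (n + 1 : ℕ)) *
      (n + d + 2 : ℕ)) = 1 / ((n : ℝ) + 1) ^ (k + 1) *
        (((n + 1 : ℕ) : ℝ) / (((d : ℝ) + 1) * ((d : ℝ) + 1 + (n + 1 : ℕ)))) := by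
    have : (d : ℝ) + 1 ≠ 0 := by positivity
    have : (n : ℝ) + d + 2 ≠ 0 := by positivity
    push_cast
    rw [show (n : ℝ) + d + 2 - (n + 1) = d + 1 by ring,
      show (d : ℝ) + 1 + (n + 1) = n + d + 2 by ring]
    field_simp
    ring
  simp_rw [hterm, ENNReal.ofReal_mul (by positivity : (0 : ℝ) ≤ 1 / ((n : ℝ) + 1) ^ (k + 1))]
  rw [ENNReal.tsum_mul_left, tsum_ofReal_eq_of_hasSum (fun d => by positivity)
    (hasSum_natCast_div_mul_harmonic (n + 1)), ← ENNReal.ofReal_mul (by positivity)]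
  congr 1
  ring

lemma zeta2E_one_eq_tsum_harmonic (k : ℕ) :
    zeta2E k 1 = ∑' m : ℕ, ENNReal.ofReal (harmonic m / ((m : ℝ) + 1) ^ k) := by
  rw [zeta2E, tsum_zetaIndex_eq_tsum_sum
    (fun p => ENNReal.ofReal (1 / ((p.1 : ℝ) ^ k * (p.2 : ℝ) ^ 1)))]
  refine tsum_congr fun m => ?_
  rw [← ENNReal.ofReal_sum_of_nonneg fun n _ => by positivity]
  congr 1
  simp only [harmonic, Rat.cast_sum, Rat.cast_inv, Rat.cast_natCast, sum_div]
  refine sum_congr rfl fun n _ => ?_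
  push_cast
  field_simp

lemma zeta2E_one_add_zeta1E (k : ℕ) : zeta2E k 1 + zeta1E (k + 1) = eulerSumE k := by
  rw [zeta2E_one_eq_tsum_harmonic, zeta1E, eulerSumE, ← ENNReal.tsum_add]
  refine tsum_congr fun n => ?_
  have hn : (0 : ℝ) < n + 1 := by positivity
  have hH : (0 : ℝ) ≤ harmonic n := by simp only [harmonic]; push_cast; positivity
  rw [← ENNReal.ofReal_add (by positivity) (by positivity), harmonic_succ]
  congr 1
  push_cast
  field_simp
  ring

lemma zeta2E_ne_top {a b : ℕ} (ha : 2 ≤ a) (hab : 3 ≤ a + b) : zeta2E a b ≠ ∞ :=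
  ne_top_of_le_ne_top (zeta1E_ne_top (by omega)) (zeta2E_le_zeta1E ha b)

theorem sum_Icc_zeta2E_eq_zeta1E {l : ℕ} (hl : 2 < l) :
    ∑ a ∈ Icc 2 (l - 1), zeta2E a (l - a) = zeta1E l := by
  have h := sum_Icc_zeta2E_add_tsum_eq hl.le
  rw [tsum_ofReal_one_div_sub_mul_pow, tsum_ofReal_one_div_pow_mul_sub_mul,
    show l - 2 + 1 = l - 1 by omega, ← zeta2E_one_add_zeta1E, show l - 1 + 1 = l by omega,
    add_comm (zeta2E _ 1)] at h
  exact (ENNReal.add_left_inj (zeta2E_ne_top (by omega) (by omega))).mp h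

/-- Euler's sum formula for double zeta values: ∑_{a=2}^{l-1} ζ(a, l-a) = ζ(l). -/
theorem sum_formula_dzv (l : ℕ) (hl : 2 < l) :
    ∑ a ∈ Finset.Icc 2 (l - 1), zeta2 a (l - a) = zeta1 l := by
  have hfin : ∀ a ∈ Icc 2 (l - 1), zeta2E a (l - a) ≠ ∞ := fun a ha => by
    rw [mem_Icc] at ha
    exact zeta2E_ne_top ha.1 (by omega)
  simp only [zeta2_eq_toReal, zeta1_eq_toReal]
  rw [← ENNReal.toReal_sum hfin, sum_Icc_zeta2E_eq_zeta1E hl]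
end
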